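/- For k = 1, 2, 3, 4, 5, 6, 7, the number of k-element subsets of L whose elements are pairwise orthogonal (⟨lᵢ,lⱼ⟩ = 0 for i ≠ j) is, respectively: 56, 756, 4032, 10080, 12096, 6048, 576. -/

import Mathlib

/-
Write `v = (d, x)` with `x : Fin 7 → ℤ`. Then `v ∈ L` says `∑ xᵢ² = d² + 1` and `∑ xᵢ = 1 - 3d`.
Cauchy–Schwarz, `(1 - 3d)² ≤ 7 (d² + 1)`, leaves `d ∈ {0, 1, 2, 3}`, and for a suitable integer `c`
the sum `∑ (xᵢ - c)(xᵢ - c - 1)` of nonnegative terms vanishes, so every `xᵢ ∈ {c, c + 1}`. Hence `L`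
is the explicit list of the 56 exceptional classes of the degree-2 del Pezzo surface, and the
orthogonal `k`-subsets are the `k`-cliques of the orthogonality graph on this list. These are
counted by the recursion "a clique either avoids the first vertex `a`, or is `a` together with a
clique among the later neighbours of `a`", which the kernel evaluates.
-/

/-- The lattice ℤ⁸. -/
abbrev V : Type := Fin 8 → ℤ

/-- The bilinear form with Gram matrix diag(1,−1,…,−1). -/
def B (v w : V) : ℤ := v 0 * w 0 - ∑ i : Fin 7, v i.succ * w i.succ

/-- The class h = (3,−1,…,−1) with ⟨h,h⟩ = 2. -/
def hh : V := ![3, -1, -1, -1, -1, -1, -1, -1]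

/-- The involution ι(v) = ⟨v,h⟩·h − v. -/
def iota (v : V) : V := B v hh • hh - v

/-- L = {v : ⟨v,v⟩ = −1, ⟨v,h⟩ = 1}. -/
def L : Set V := {v | B v v = -1 ∧ B v hh = 1}

/-- F = {v : ⟨v,v⟩ = 0, ⟨v,h⟩ = 2}. -/
def F : Set V := {v | B v v = 0 ∧ B v hh = 2}

/-- L̄ = L/⟨ι⟩, realized as the set of ι-orbits. -/
def Lbar : Set (Set V) := {p | ∃ v ∈ L, p = {v, iota v}}

/-- F̄ = F/⟨ι⟩, realized as the set of ι-orbits. -/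
def Fbar : Set (Set V) := {p | ∃ v ∈ F, p = {v, iota v}}

/-- G = {g ∈ GL₈(ℤ) : g preserves B and g(h) = h}. -/
def G : Subgroup (V ≃ₗ[ℤ] V) where
  carrier := {g | (∀ v w : V, B (g v) (g w) = B v w) ∧ g hh = hh}
  one_mem' := ⟨fun _ _ => rfl, rfl⟩
  mul_mem' := by
    rintro a b ⟨ha1, ha2⟩ ⟨hb1, hb2⟩
    refine ⟨fun v w => ?_, ?_⟩
    · show B (a (b v)) (a (b w)) = B v w
      rw [ha1, hb1]
    · show a (b hh) = hh
      rw [hb2, ha2]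
  inv_mem' := by
    rintro a ⟨ha1, ha2⟩
    refine ⟨fun v w => ?_, ?_⟩
    · show B (a.symm v) (a.symm w) = B v w
      conv_rhs => rw [← a.apply_symm_apply v, ← a.apply_symm_apply w]
      rw [ha1]
    · show a.symm hh = hh
      conv_lhs => rw [← ha2]
      exact a.symm_apply_apply hh

/-- The k-element subsets of L whose elements are pairwise orthogonal. -/
def OrthSets (k : ℕ) : Set (Finset V) :=
  {s | ↑s ⊆ L ∧ s.card = k ∧ ∀ a ∈ s, ∀ b ∈ s, a ≠ b → B a b = 0}

section Cliques

variable {α : Type*} (r : α → α → Prop)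

def cliqueFinsets (S : Set α) (k : ℕ) : Set (Finset α) :=
  {s | ↑s ⊆ S ∧ s.card = k ∧ (s : Set α).Pairwise r}

def countCliques [DecidableRel r] : ℕ → List α → ℕ
  | 0, _ => 1
  | k + 1, l => (l.tails.map fun
      | [] => 0
      | a :: t => countCliques k (t.filter (r a ·))).sum

variable {r}

lemma countCliques_succ_nil [DecidableRel r] (k : ℕ) : countCliques r (k + 1) [] = 0 := rfl

lemma countCliques_succ_cons [DecidableRel r] (k : ℕ) (a : α) (t : List α) :
    countCliques r (k + 1) (a :: t) =
      countCliques r k (t.filter (r a ·)) + countCliques r (k + 1) t := rfl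

lemma cliqueFinsets_zero (S : Set α) : cliqueFinsets r S 0 = {∅} := by
  ext s
  simp only [cliqueFinsets, Finset.card_eq_zero, Set.mem_ofPred_eq, Set.mem_singleton_iff]
  exact ⟨fun h => h.2.1, fun h => by subst h; simp⟩

lemma cliqueFinsets_empty_succ (k : ℕ) : cliqueFinsets r ∅ (k + 1) = ∅ := by
  ext s
  simp only [cliqueFinsets, Set.subset_empty_iff, Finset.coe_eq_empty, Set.mem_ofPred_eq,
    Set.mem_empty_iff_false, iff_false]
  rintro ⟨rfl, h, -⟩
  simp at h

lemma Set.Finite.cliqueFinsets {S : Set α} (hS : S.Finite) (k : ℕ) :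
    (cliqueFinsets r S k).Finite :=
  (hS.finite_subsets.preimage Finset.coe_injective.injOn).subset fun _ hs => hs.1

lemma cliqueFinsets_insert_succ [DecidableEq α] [Std.Symm r] {a : α} {S : Set α} (ha : a ∉ S)
    (k : ℕ) :
    cliqueFinsets r (insert a S) (k + 1) =
      cliqueFinsets r S (k + 1) ∪ insert a '' cliqueFinsets r (S ∩ {b | r a b}) k := by
  ext s
  constructor
  · rintro ⟨hsub, hcard, hpw⟩
    by_cases has : a ∈ s
    · refine Or.inr ⟨s.erase a, ⟨fun b hb => ?_, ?_, hpw.mono (by simp)⟩, Finset.insert_erase has⟩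
      · obtain ⟨hba, hbs⟩ := Finset.mem_erase.mp hb
        exact ⟨(hsub hbs).resolve_left hba, hpw has hbs (Ne.symm hba)⟩
      · rw [Finset.card_erase_of_mem has, hcard, Nat.add_sub_cancel]
    · exact Or.inl ⟨fun b hb => (hsub hb).resolve_left (ne_of_mem_of_not_mem hb has), hcard, hpw⟩
  · rintro (⟨hsub, hcard, hpw⟩ | ⟨t, ⟨hsub, hcard, hpw⟩, rfl⟩)
    · exact ⟨hsub.trans (Set.subset_insert a S), hcard, hpw⟩
    · have hat : a ∉ t := fun h => ha (hsub h).1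
      refine ⟨?_, by rw [Finset.card_insert_of_notMem hat, hcard], ?_⟩
      · rw [Finset.coe_insert]
        exact Set.insert_subset_insert (hsub.trans Set.inter_subset_left)
      · rw [Finset.coe_insert, Set.pairwise_insert_of_symm_of_notMem hat]
        exact ⟨hpw, fun b hb => (hsub hb).2⟩

lemma ncard_cliqueFinsets [DecidableEq α] [DecidableRel r] [Std.Symm r] (k : ℕ) {l : List α}
    (hl : l.Nodup) : (cliqueFinsets r {a | a ∈ l} k).ncard = countCliques r k l := by
  induction k generalizing l with
  | zero => rw [cliqueFinsets_zero, Set.ncard_singleton]; rfl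
  | succ k ihk =>
    induction l with
    | nil => simp [cliqueFinsets_empty_succ, countCliques_succ_nil]
    | cons a t iht =>
      obtain ⟨hat, ht⟩ := List.nodup_cons.mp hl
      have hfilter : {b | b ∈ t.filter (r a ·)} = {b | b ∈ t} ∩ {b | r a b} := by
        ext b; simp
      have hdisj : Disjoint (cliqueFinsets r {b | b ∈ t} (k + 1))
          (insert a '' cliqueFinsets r ({b | b ∈ t} ∩ {b | r a b}) k) := by
        rw [Set.disjoint_left]
        rintro _ ⟨hsub, -⟩ ⟨s, -, rfl⟩
        exact hat (hsub (Finset.mem_insert_self a s))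
      have hinj : Set.InjOn (insert a) (cliqueFinsets r ({b | b ∈ t} ∩ {b | r a b}) k) := by
        intro s hs s' hs' h
        rw [← Finset.erase_insert fun h => hat (hs.1 h).1, h,
          Finset.erase_insert fun h => hat (hs'.1 h).1]
      have hfin : {b | b ∈ t}.Finite := t.finite_toSet
      rw [show {b | b ∈ a :: t} = insert a {b | b ∈ t} by ext; simp,
        cliqueFinsets_insert_succ (S := {b | b ∈ t}) hat,
        Set.ncard_union_eq hdisj (hfin.cliqueFinsets _)
          ((hfin.inter_of_left _).cliqueFinsets _ |>.image _),
        hinj.ncard_image, iht ht, ← hfilter, ihk (ht.filter _),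
        countCliques_succ_cons, add_comm]

end Cliques

lemma B_comm (v w : V) : B v w = B w v := by
  simp only [B, mul_comm]

lemma B_self_eq (v : V) : B v v = v 0 ^ 2 - ∑ i, Fin.tail v i ^ 2 := by
  simp only [B, Fin.tail, sq]

lemma B_hh_eq (v : V) : B v hh = 3 * v 0 + ∑ i, Fin.tail v i := by
  have hh_succ : ∀ i : Fin 7, hh i.succ = -1 := by decide
  simp only [B, hh_succ, Fin.tail, mul_neg_one, Finset.sum_neg_distrib, sub_neg_eq_add]
  rw [show hh 0 = 3 from rfl, mul_comm]

lemma mem_L_iff (v : V) :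
    v ∈ L ↔ ∑ i, Fin.tail v i ^ 2 = v 0 ^ 2 + 1 ∧ ∑ i, Fin.tail v i = 1 - 3 * v 0 := by
  simp only [L, Set.mem_ofPred_eq, B_self_eq, B_hh_eq]
  constructor <;> rintro ⟨h1, h2⟩ <;> constructor <;> linarith

lemma Int.eq_or_eq_add_one_of_sum_mul_sub_one_eq_zero {ι : Type*} {s : Finset ι} {x : ι → ℤ}
    {c : ℤ} (h : ∑ i ∈ s, (x i - c) * (x i - c - 1) = 0) : ∀ i ∈ s, x i = c ∨ x i = c + 1 := by
  have hnonneg : ∀ n : ℤ, 0 ≤ n * (n - 1) := fun n => by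
    rcases le_or_gt n 0 with hn | hn <;> nlinarith
  intro i hi
  have hi0 := (Finset.sum_eq_zero_iff_of_nonneg fun j _ => hnonneg (x j - c)).mp h i hi
  rcases mul_eq_zero.mp hi0 with hc | hc
  · exact Or.inl (by linarith)
  · exact Or.inr (by linarith)

lemma nonneg_and_le_three_of_mem_L {v : V} (hv : v ∈ L) : 0 ≤ v 0 ∧ v 0 ≤ 3 := by
  obtain ⟨hsq, hsum⟩ := (mem_L_iff v).mp hv
  have hcs := sq_sum_le_card_mul_sum_sq (s := Finset.univ) (f := Fin.tail v)
  rw [hsq, hsum, Finset.card_univ, Fintype.card_fin] at hcs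
  have hneg : (v 0 + 1) * (v 0 - 4) < 0 := by push_cast at hcs; nlinarith
  rcases mul_neg_iff.mp hneg with h | h <;> omega

lemma exists_tail_mem_pair_of_mem_L {v : V} (hv : v ∈ L) :
    ∃ c : ℤ, (v 0, c) ∈ [(0, 0), (1, -1), (2, -1), (3, -2)] ∧
      ∀ i, Fin.tail v i ∈ ({c, c + 1} : Finset ℤ) := by
  obtain ⟨hsq, hsum⟩ := (mem_L_iff v).mp hv
  have hsum_eq : ∀ c : ℤ, ∑ i, (Fin.tail v i - c) * (Fin.tail v i - c - 1) =
      v 0 ^ 2 + 1 - (2 * c + 1) * (1 - 3 * v 0) + 7 * (c * (c + 1)) := by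
    intro c
    simp only [show ∀ y : ℤ, (y - c) * (y - c - 1) = y ^ 2 - (2 * c + 1) * y + c * (c + 1) by
      intro y; ring]
    rw [Finset.sum_add_distrib, Finset.sum_sub_distrib, ← Finset.mul_sum, hsq, hsum]
    simp
  have hpair : ∀ c : ℤ, v 0 ^ 2 + 1 - (2 * c + 1) * (1 - 3 * v 0) + 7 * (c * (c + 1)) = 0 →
      ∀ i, Fin.tail v i ∈ ({c, c + 1} : Finset ℤ) := fun c hc i => by
    simpa using Int.eq_or_eq_add_one_of_sum_mul_sub_one_eq_zero ((hsum_eq c).trans hc) i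
      (Finset.mem_univ i)
  obtain ⟨h0, h3⟩ := nonneg_and_le_three_of_mem_L hv
  interval_cases v 0
  · exact ⟨0, by simp, hpair 0 (by norm_num)⟩
  · exact ⟨-1, by simp, hpair (-1) (by norm_num)⟩
  · exact ⟨-1, by simp, hpair (-1) (by norm_num)⟩
  · exact ⟨-2, by simp, hpair (-2) (by norm_num)⟩

/-- In the standard basis `ℓ, e₁, …, e₇`: the `eᵢ`, the `ℓ - eᵢ - eⱼ`, the `2ℓ` minus five `eⱼ`,
and the `3ℓ - 2eᵢ` minus the other six `eⱼ`. -/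
def Llist : List V := [
  ![0, 0, 0, 0, 0, 0, 0, 1],
  ![0, 0, 0, 0, 0, 0, 1, 0],
  ![0, 0, 0, 0, 0, 1, 0, 0],
  ![0, 0, 0, 0, 1, 0, 0, 0],
  ![0, 0, 0, 1, 0, 0, 0, 0],
  ![0, 0, 1, 0, 0, 0, 0, 0],
  ![0, 1, 0, 0, 0, 0, 0, 0],
  ![1, -1, -1, 0, 0, 0, 0, 0],
  ![1, -1, 0, -1, 0, 0, 0, 0],
  ![1, -1, 0, 0, -1, 0, 0, 0],
  ![1, -1, 0, 0, 0, -1, 0, 0],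
  ![1, -1, 0, 0, 0, 0, -1, 0],
  ![1, -1, 0, 0, 0, 0, 0, -1],
  ![1, 0, -1, -1, 0, 0, 0, 0],
  ![1, 0, -1, 0, -1, 0, 0, 0],
  ![1, 0, -1, 0, 0, -1, 0, 0],
  ![1, 0, -1, 0, 0, 0, -1, 0],
  ![1, 0, -1, 0, 0, 0, 0, -1],
  ![1, 0, 0, -1, -1, 0, 0, 0],
  ![1, 0, 0, -1, 0, -1, 0, 0],
  ![1, 0, 0, -1, 0, 0, -1, 0],
  ![1, 0, 0, -1, 0, 0, 0, -1],
  ![1, 0, 0, 0, -1, -1, 0, 0],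
  ![1, 0, 0, 0, -1, 0, -1, 0],
  ![1, 0, 0, 0, -1, 0, 0, -1],
  ![1, 0, 0, 0, 0, -1, -1, 0],
  ![1, 0, 0, 0, 0, -1, 0, -1],
  ![1, 0, 0, 0, 0, 0, -1, -1],
  ![2, -1, -1, -1, -1, -1, 0, 0],
  ![2, -1, -1, -1, -1, 0, -1, 0],
  ![2, -1, -1, -1, -1, 0, 0, -1],
  ![2, -1, -1, -1, 0, -1, -1, 0],
  ![2, -1, -1, -1, 0, -1, 0, -1],
  ![2, -1, -1, -1, 0, 0, -1, -1],
  ![2, -1, -1, 0, -1, -1, -1, 0],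
  ![2, -1, -1, 0, -1, -1, 0, -1],
  ![2, -1, -1, 0, -1, 0, -1, -1],
  ![2, -1, -1, 0, 0, -1, -1, -1],
  ![2, -1, 0, -1, -1, -1, -1, 0],
  ![2, -1, 0, -1, -1, -1, 0, -1],
  ![2, -1, 0, -1, -1, 0, -1, -1],
  ![2, -1, 0, -1, 0, -1, -1, -1],
  ![2, -1, 0, 0, -1, -1, -1, -1],
  ![2, 0, -1, -1, -1, -1, -1, 0],
  ![2, 0, -1, -1, -1, -1, 0, -1],
  ![2, 0, -1, -1, -1, 0, -1, -1],
  ![2, 0, -1, -1, 0, -1, -1, -1],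
  ![2, 0, -1, 0, -1, -1, -1, -1],
  ![2, 0, 0, -1, -1, -1, -1, -1],
  ![3, -2, -1, -1, -1, -1, -1, -1],
  ![3, -1, -2, -1, -1, -1, -1, -1],
  ![3, -1, -1, -2, -1, -1, -1, -1],
  ![3, -1, -1, -1, -2, -1, -1, -1],
  ![3, -1, -1, -1, -1, -2, -1, -1],
  ![3, -1, -1, -1, -1, -1, -2, -1],
  ![3, -1, -1, -1, -1, -1, -1, -2]
]

lemma Llist_nodup : Llist.Nodup := by decide +kernel

lemma mem_Llist_of_mem_box : ∀ p ∈ [((0 : ℤ), (0 : ℤ)), (1, -1), (2, -1), (3, -2)],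
    ∀ x ∈ Fintype.piFinset (fun _ : Fin 7 => ({p.2, p.2 + 1} : Finset ℤ)),
      B (Fin.cons p.1 x) (Fin.cons p.1 x) = -1 → B (Fin.cons p.1 x) hh = 1 →
        (Fin.cons p.1 x : V) ∈ Llist := by
  decide +kernel

lemma L_eq : L = {v | v ∈ Llist} := by
  ext v
  constructor
  · intro hv
    obtain ⟨c, hc, hx⟩ := exists_tail_mem_pair_of_mem_L hv
    rw [← Fin.cons_self_tail v] at hv ⊢
    exact mem_Llist_of_mem_box _ hc _ (Fintype.mem_piFinset.mpr hx) hv.1 hv.2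
  · exact (show ∀ v ∈ Llist, B v v = -1 ∧ B v hh = 1 by decide +kernel) v

def Orth (v w : V) : Prop := B v w = 0

instance : DecidableRel Orth := fun v w => Int.decEq (B v w) 0

instance : Std.Symm Orth := ⟨fun v w h => (B_comm w v).trans h⟩

lemma OrthSets_eq (k : ℕ) : OrthSets k = cliqueFinsets Orth {v | v ∈ Llist} k := by
  rw [← L_eq]
  rfl

/-- the numbers of pairwise orthogonal k-subsets of L for k = 1,…,7. -/
theorem stmt13 :
    (OrthSets 1).ncard = 56 ∧ (OrthSets 2).ncard = 756 ∧ (OrthSets 3).ncard = 4032 ∧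
    (OrthSets 4).ncard = 10080 ∧ (OrthSets 5).ncard = 12096 ∧ (OrthSets 6).ncard = 6048 ∧
    (OrthSets 7).ncard = 576 := by
  simp only [OrthSets_eq, ncard_cliqueFinsets _ Llist_nodup]
  decide +kernel
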